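/- arXiv:2406.19919 — 3 statements merged into one kernel-verified Lean document; each statement's English description precedes it below -/
import Mathlib

section
/- Let R and S be scalar formal pseudo-differential series over a differential ring with S invertible, and set R₂ = − S^{-1} R⁺ S. Then for every integer j ≥ 1, res(R^j) + (−1)^j res(R₂^j) ∈ Im D. -/
/-!
Formal pseudo-differential series over a commutative differential ring `(A, d)`.
A series `X = ∑_{i ≤ N} a_i D^i` is represented by its coefficient function
`ℤ → A` (the coefficient of `D^i`), with support bounded above.
-/

noncomputable section

/-- Generalized binomial coefficient `C(n, k)` for an integer `n`. -/
def gbinom (n : ℤ) (k : ℕ) : ℤ := Polynomial.eval n (descPochhammer ℤ k) / (k.factorial : ℤ)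

variable {A : Type*} [CommRing A]

/-- Support of a coefficient function is bounded above: genuine pseudo-differential series. -/
def PDSBdd (X : ℤ → A) : Prop := ∃ N : ℤ, ∀ i : ℤ, N < i → X i = 0

/-- Product of pseudo-differential series, induced by the extended Leibniz rule
`D^i ∘ a = ∑_{k ≥ 0} C(i,k) d^k(a) D^{i-k}`. -/
def pdsMul (d : A → A) (X Y : ℤ → A) : ℤ → A := fun n =>
  ∑ᶠ p : ℤ × ℕ, gbinom p.1 p.2 • (X p.1 * d^[p.2] (Y (n - p.1 + p.2)))

/-- The unit series `1 = D^0`. -/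
def pdsOne : ℤ → A := fun n => if n = 0 then 1 else 0

/-- Powers of a pseudo-differential series. -/
def pdsPow (d : A → A) (X : ℤ → A) : ℕ → ℤ → A
  | 0 => pdsOne
  | n + 1 => pdsMul d (pdsPow d X n) X

/-- Formal conjugate `X⁺ = ∑ (−D)^i ∘ a_i`. -/
def pdsConj (d : A → A) (X : ℤ → A) : ℤ → A := fun n =>
  ∑ᶠ k : ℕ, (((-1 : ℤˣ) ^ (n + (k : ℤ)) : ℤˣ) : ℤ) •
    (gbinom (n + k) k • d^[k] (X (n + k)))

/-- The residue: the coefficient of `D^{-1}`. -/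
def pdsRes (X : ℤ → A) : A := X (-1)

/-!
Put `W = S⁻¹ R⁺ S`, so that `R₂ = -W` and `(-1)^j res(R₂^j) = res(W^j)`. Since `S S⁻¹ = 1`,
associativity gives `W^j = S⁻¹ (R⁺)^j S`, and conjugation reverses products, so
`(R⁺)^j = (R^j)⁺`. The residue of a commutator `X Y - Y X` is a total derivative (integrate
`a d^k(b)` by parts term by term), hence `res(S⁻¹ P S) ≡ res(S S⁻¹ P) = res P` modulo `Im d`;
finally `res(P⁺) = -res(P)`. Together, `res(R^j) + res(W^j) ≡ res(R^j) + res((R^j)⁺) = 0`.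

Associativity and `(X Y)⁺ = Y⁺ X⁺` are checked coefficientwise: both sides are expanded, by the
Leibniz rule for `d^k` and Chu–Vandermonde, into one finite sum over products of derivatives of
the coefficients.
-/

open Finset Function

theorem iterate_map_finsum {M F ι : Type*} [AddCommMonoid M] [FunLike F M M]
    [AddMonoidHomClass F M M] (f : F) (k : ℕ) {g : ι → M} (hg : HasFiniteSupport g) :
    (⇑f)^[k] (∑ᶠ i, g i) = ∑ᶠ i, (⇑f)^[k] (g i) := by
  induction k generalizing g with
  | zero => rfl
  | succ k ih =>
    simp only [iterate_succ_apply]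
    rw [map_finsum f hg, ih (hg.subset fun i hi h0 => hi (by rw [h0, map_zero]))]

theorem finsum_sum_antidiagonal {α M : Type*} [AddCommMonoid M] (f : α × (ℕ × ℕ) → M)
    (hf : HasFiniteSupport f) :
    ∑ᶠ x : α × ℕ, ∑ y ∈ antidiagonal x.2, f (x.1, y) = ∑ᶠ z, f z := by
  classical
  let φ : α × (ℕ × ℕ) → α × ℕ := fun z => (z.1, z.2.1 + z.2.2)
  have hfiber (x : α × ℕ) :
      ∑ y ∈ antidiagonal x.2, f (x.1, y) = ∑ z ∈ hf.toFinset with φ z = x, f z := by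
    refine sum_bij_ne_zero (fun y _ _ => (x.1, y)) ?_ ?_ ?_ ?_
    · intro y hy hne
      simp only [mem_filter, Prod.ext_iff, φ]
      exact ⟨(Set.Finite.mem_toFinset hf).2 hne, trivial, HasAntidiagonal.mem_antidiagonal.1 hy⟩
    · intro y _ _ y' _ _ h
      simpa using h
    · rintro ⟨a, y⟩ hz hne
      simp only [mem_filter, φ, Prod.ext_iff] at hz
      exact ⟨y, by simp [← hz.2.2], by simpa [← hz.2.1] using hne, by simp [← hz.2.1]⟩
    · intros; rfl
  rw [finsum_congr hfiber, finsum_eq_sum_of_support_subset _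
      (hf.toFinset.support_of_fiberwise_sum_subset_image _ φ),
    sum_fiberwise_of_maps_to (fun _ h => mem_image_of_mem φ h)]
  exact (finsum_eq_sum_of_support_subset _ (Set.Finite.coe_toFinset hf).ge).symm

theorem Function.HasFiniteSupport.sum_antidiagonal {α M : Type*} [AddCommMonoid M]
    {f : α × (ℕ × ℕ) → M} (hf : HasFiniteSupport f) :
    HasFiniteSupport fun x : α × ℕ => ∑ y ∈ antidiagonal x.2, f (x.1, y) := by
  refine (hf.image fun z => (z.1, z.2.1 + z.2.2)).subset fun x hx => ?_
  obtain ⟨y, hy, hne⟩ := exists_ne_zero_of_sum_ne_zero hx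
  exact ⟨(x.1, y), hne, Prod.ext rfl (HasAntidiagonal.mem_antidiagonal.1 hy)⟩

theorem finsum_finsum_eq_finsum_of_sum_antidiagonal {α β γ M : Type*} [AddCommMonoid M]
    {G : α × β → M} {H : γ × (ℕ × ℕ) → M} (e : α × β → γ × ℕ) (he : Bijective e)
    (hGH : ∀ x, G x = ∑ y ∈ antidiagonal (e x).2, H ((e x).1, y)) (hH : HasFiniteSupport H) :
    ∑ᶠ (a) (b), G (a, b) = ∑ᶠ z, H z := by
  have hG : HasFiniteSupport G := by
    refine (hH.sum_antidiagonal.comp_of_injective he.injective).subset fun x hx => ?_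
    rwa [mem_support, hGH] at hx
  rw [← finsum_curry G hG, ← finsum_sum_antidiagonal H hH]
  exact finsum_eq_of_bijective e he hGH

theorem Derivation.iterate_apply_mul {R : Type*} [CommSemiring R] [Algebra R A]
    (D : Derivation R A A) (n : ℕ) (a b : A) :
    D^[n] (a * b) = ∑ ij ∈ antidiagonal n, n.choose ij.1 • (D^[ij.1] a * D^[ij.2] b) := by
  induction n with
  | zero => simp
  | succ n ih =>
    rw [sum_antidiagonal_choose_succ_nsmul (M := A) (fun i j => D^[i] a * D^[j] b) n]
    simp only [Function.iterate_succ_apply', ih, map_sum, map_nsmul, Derivation.leibniz,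
      smul_eq_mul, smul_add, sum_add_distrib]
    congr 1
    refine sum_congr rfl fun ⟨i, j⟩ hij => ?_
    rw [Nat.choose_symm_of_eq_add (HasAntidiagonal.mem_antidiagonal.1 hij).symm, mul_comm]

theorem Int.choose_add_sub_one (r : ℤ) (k : ℕ) :
    Ring.choose (r + k - 1) k = ((k : ℤ).negOnePow : ℤ) * Ring.choose (-r) k := by
  rw [Ring.choose_neg, Units.smul_def, smul_eq_mul, ← mul_assoc, Int.units_coe_mul_self,
    one_mul]

/- The coefficient in `pdsConjMulCoeff`, expanded by Chu–Vandermonde along `β` (after upper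
negation of `C(n - i + α + β, β)`) and along `α`. -/
theorem negOnePow_mul_choose_mul_choose_eq_sum (n i : ℤ) (α β : ℕ) :
    ((n + α + β).negOnePow : ℤ) * Ring.choose (n + α) α * Ring.choose (n - i + α + β) β =
      ∑ vs ∈ antidiagonal β, ((n + α + vs.1).negOnePow : ℤ) * Ring.choose (n + α + vs.1) (α + vs.1)
        * (α + vs.1).choose α * Ring.choose i vs.2 := by
  have hterm (v s : ℕ) : ((n + α + v).negOnePow : ℤ) * Ring.choose (n + α + v) (α + v)
      * (α + v).choose α * Ring.choose i s = ((n + α).negOnePow : ℤ) * Ring.choose (n + α) α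
        * (Ring.choose (-(n + α + 1)) v * Ring.choose i s) := by
    have h1 := Ring.choose_add_smul_choose (n + α : ℤ) α v
    have h2 := Int.choose_add_sub_one (n + α + 1) v
    rw [show n + α + 1 + v - 1 = n + α + v by ring] at h2
    rw [nsmul_eq_mul] at h1
    rw [Nat.choose_symm_add, Int.negOnePow_add, Units.val_mul]
    linear_combination (((n + α).negOnePow : ℤ) * ((v : ℤ).negOnePow : ℤ) * Ring.choose i s) * h1
      + (((n + α).negOnePow : ℤ) * ((v : ℤ).negOnePow : ℤ) * Ring.choose (n + α) α
        * Ring.choose i s) * h2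
      + (((n + α).negOnePow : ℤ) * Ring.choose (n + α) α * Ring.choose (-(n + α + 1)) v
        * Ring.choose i s) * Int.units_coe_mul_self (v : ℤ).negOnePow
  rw [sum_congr rfl fun vs _ => hterm vs.1 vs.2, ← mul_sum,
    ← Ring.add_choose_eq _ (Commute.all _ _)]
  have h := Int.choose_add_sub_one (n - i + α + 1) β
  rw [show n - i + α + 1 + β - 1 = n - i + α + β by ring,
    show -(n - i + α + 1) = -(n + α + 1) + i by ring] at h
  rw [h, Int.negOnePow_add, Units.val_mul]
  linear_combination (((n + α).negOnePow : ℤ) * Ring.choose (n + α) α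
    * Ring.choose (-(n + α + 1) + i) β) * Int.units_coe_mul_self (β : ℤ).negOnePow

theorem negOnePow_mul_choose_mul_choose_eq_sum' (n i : ℤ) (α β : ℕ) :
    ((n + α + β).negOnePow : ℤ) * Ring.choose (n + α) α * Ring.choose (n - i + α + β) β =
      ∑ qb ∈ antidiagonal α, Ring.choose (n - i + α) qb.1 * ((i.negOnePow : ℤ) * Ring.choose i qb.2)
        * (((n - i + α + β).negOnePow : ℤ) * Ring.choose (n - i + α + β) β) := by
  simp only [← sum_mul, mul_left_comm _ (i.negOnePow : ℤ), ← mul_sum]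
  rw [← Ring.add_choose_eq _ (Commute.all _ _), show n - i + α + i = n + α by ring,
    show n + α + β = i + (n - i + α + β) by ring, Int.negOnePow_add, Units.val_mul]
  ring

theorem gbinom_eq_choose (n : ℤ) (k : ℕ) : gbinom n k = Ring.choose n k := by
  rw [gbinom, Polynomial.eval_eq_smeval, Ring.descPochhammer_eq_factorial_smul_choose,
    nsmul_eq_mul, Int.mul_ediv_cancel_left _ (by exact_mod_cast k.factorial_ne_zero)]

theorem pdsMul_apply (d : A → A) (X Y : ℤ → A) (n : ℤ) :
    pdsMul d X Y n =
      ∑ᶠ ik : ℤ × ℕ, Ring.choose ik.1 ik.2 • (X ik.1 * d^[ik.2] (Y (n - ik.1 + ik.2))) := by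
  simp only [pdsMul, gbinom_eq_choose]

theorem pdsConj_apply (d : A → A) (X : ℤ → A) (n : ℤ) :
    pdsConj d X n =
      ∑ᶠ k : ℕ, (((n + k).negOnePow : ℤ) * Ring.choose (n + k) k) • d^[k] (X (n + k)) := by
  simp only [pdsConj, gbinom_eq_choose, smul_smul]
  rfl

theorem pdsBdd_iff {X : ℤ → A} : PDSBdd X ↔ ∃ N, ∀ i, X i ≠ 0 → i ≤ N :=
  exists_congr fun N => forall_congr' fun i => by rw [not_imp_comm, not_le]

theorem pdsOne_mul (d : A → A) (X : ℤ → A) : pdsMul d pdsOne X = X := by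
  funext n
  rw [pdsMul_apply, finsum_eq_single _ (0, 0)]
  · simp [pdsOne]
  · rintro ⟨i, k⟩ hik
    rcases eq_or_ne i 0 with rfl | hi
    · rw [Ring.choose_zero_pos ℤ (Nat.pos_of_ne_zero fun hk => hik (Prod.ext rfl hk)), zero_smul]
    · simp [pdsOne, hi]

theorem pdsPow_one (d : A → A) (X : ℤ → A) : pdsPow d X 1 = X :=
  pdsOne_mul d X

theorem pdsMul_neg_left (d : A → A) (X Y : ℤ → A) : pdsMul d (-X) Y = -pdsMul d X Y := by
  funext n
  simp only [pdsMul_apply, Pi.neg_apply, neg_mul, smul_neg, finsum_neg_distrib]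

theorem pdsRes_pdsConj (d : A → A) (X : ℤ → A) : pdsRes (pdsConj d X) = -pdsRes X := by
  rw [pdsRes, pdsConj_apply, finsum_eq_single _ 0]
  · simp [pdsRes]
  · intro k hk
    rw [show (-1 : ℤ) + k = ((k - 1 : ℕ) : ℤ) by omega, Ring.choose_natCast,
      Nat.choose_eq_zero_of_lt (by omega)]
    simp

/-- The coefficient of `D^n` in `X ∘ Y ∘ Z`: the product `X_p D^p ∘ Y_m D^m ∘ Z_l D^l`
contributes `C(p, a) C(p + m - a, b) X_p d^a(Y_m) d^b(Z_l)` to `D^(p + m + l - a - b)`. -/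
def pdsTripleCoeff (d : A → A) (X Y Z : ℤ → A) (n : ℤ) : A :=
  ∑ᶠ t : ((ℤ × ℤ) × ℕ) × ℕ, match t with
    | (((p, m), a), b) => (Ring.choose p a * Ring.choose (p + m - a) b) •
        (X p * (d^[a] (Y m) * d^[b] (Z (n - p - m + a + b))))

/-- The coefficient of `D^n` in `(X ∘ Y)⁺ = Y⁺ ∘ X⁺`, as a combination of the products
`d^α(X_i) d^β(Y_j)` with `j = n - i + α + β`. -/
def pdsConjMulCoeff (d : A → A) (X Y : ℤ → A) (n : ℤ) : A :=
  ∑ᶠ t : (ℤ × ℕ) × ℕ, match t with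
    | ((i, α), β) =>
      (((n + α + β).negOnePow : ℤ) * Ring.choose (n + α) α * Ring.choose (n - i + α + β) β) •
        (d^[α] (X i) * d^[β] (Y (n - i + α + β)))

section

variable (d : Derivation ℤ A A)

theorem PDSBdd.finite_setOf_ne_zero {X Y : ℤ → A} (hX : PDSBdd X) (hY : PDSBdd Y) (n : ℤ) :
    {ik : ℤ × ℕ | X ik.1 ≠ 0 ∧ Y (n - ik.1 + ik.2) ≠ 0}.Finite := by
  obtain ⟨Nx, hX⟩ := pdsBdd_iff.1 hX
  obtain ⟨Ny, hY⟩ := pdsBdd_iff.1 hY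
  refine (Icc (n - Ny) Nx ×ˢ range (Nx + Ny - n + 1).toNat).finite_toSet.subset ?_
  rintro ⟨i, k⟩ ⟨hi, hk⟩
  have := hX i hi
  have := hY _ hk
  simp only [coe_product, coe_Icc, coe_range, Set.mem_prod, Set.mem_Icc, Set.mem_Iio]
  omega

theorem PDSBdd.finite_setOf_ne_zero' {X Y : ℤ → A} (hX : PDSBdd X) (hY : PDSBdd Y) (n : ℤ) :
    {z : (ℤ × ℕ) × (ℕ × ℕ) | X z.1.1 ≠ 0 ∧ Y (n - z.1.1 + z.1.2 + (z.2.1 + z.2.2)) ≠ 0}.Finite := by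
  obtain ⟨Nx, hX⟩ := pdsBdd_iff.1 hX
  obtain ⟨Ny, hY⟩ := pdsBdd_iff.1 hY
  let B := (Nx + Ny - n + 1).toNat
  refine ((Icc (n - Ny) Nx ×ˢ range B) ×ˢ (range B ×ˢ range B)).finite_toSet.subset ?_
  rintro ⟨⟨i, a⟩, b, c⟩ ⟨hi, hj⟩
  have := hX i hi
  have := hY (n - i + a + (b + c)) hj
  simp only [coe_product, coe_Icc, coe_range, Set.mem_prod, Set.mem_Icc, Set.mem_Iio, B]
  omega

theorem PDSBdd.finite_setOf_ne_zero₃ {X Y Z : ℤ → A} (hX : PDSBdd X) (hY : PDSBdd Y)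
    (hZ : PDSBdd Z) (n : ℤ) :
    {t : ((ℤ × ℤ) × ℕ) × (ℕ × ℕ) | X t.1.1.1 ≠ 0 ∧ Y t.1.1.2 ≠ 0 ∧
      Z (n - t.1.1.1 - t.1.1.2 + t.1.2 + (t.2.1 + t.2.2)) ≠ 0}.Finite := by
  obtain ⟨Nx, hX⟩ := pdsBdd_iff.1 hX
  obtain ⟨Ny, hY⟩ := pdsBdd_iff.1 hY
  obtain ⟨Nz, hZ⟩ := pdsBdd_iff.1 hZ
  let B := (Nx + Ny + Nz - n + 1).toNat
  refine (((Icc (n - Ny - Nz) Nx ×ˢ Icc (n - Nx - Nz) Ny) ×ˢ range B) ×ˢ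
    (range B ×ˢ range B)).finite_toSet.subset ?_
  rintro ⟨⟨⟨p, m⟩, a⟩, b, c⟩ ⟨hp, hm, hl⟩
  have := hX p hp
  have := hY m hm
  have := hZ (n - p - m + a + (b + c)) hl
  simp only [coe_product, coe_Icc, coe_range, Set.mem_prod, Set.mem_Icc, Set.mem_Iio, B]
  omega

theorem hasFiniteSupport_pdsMul_summand {X Y : ℤ → A} (hX : PDSBdd X) (hY : PDSBdd Y) (n : ℤ)
    (c : ℤ × ℕ → ℤ) :
    HasFiniteSupport fun ik : ℤ × ℕ => c ik • (X ik.1 * d^[ik.2] (Y (n - ik.1 + ik.2))) :=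
  (hX.finite_setOf_ne_zero hY n).subset fun _ hne =>
    ⟨fun h => hne (by simp [h]), fun h => hne (by simp [h])⟩

theorem hasFiniteSupport_pdsConj_summand {X : ℤ → A} (hX : PDSBdd X) (n : ℤ) (c : ℕ → ℤ) :
    HasFiniteSupport fun k : ℕ => c k • d^[k] (X (n + k)) := by
  obtain ⟨N, hX⟩ := pdsBdd_iff.1 hX
  refine (range (N - n + 1).toNat).finite_toSet.subset fun k hne => ?_
  have hk := hX (n + k) fun h => hne (by simp [h])
  simp only [coe_range, Set.mem_Iio]
  omega

theorem PDSBdd.pdsMul {X Y : ℤ → A} (hX : PDSBdd X) (hY : PDSBdd Y) :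
    PDSBdd (pdsMul (⇑d) X Y) := by
  obtain ⟨Nx, hX⟩ := pdsBdd_iff.1 hX
  obtain ⟨Ny, hY⟩ := pdsBdd_iff.1 hY
  refine pdsBdd_iff.2 ⟨Nx + Ny, fun n hn => ?_⟩
  rw [pdsMul_apply] at hn
  refine not_lt.1 fun hlt => hn (finsum_eq_zero_of_forall_eq_zero fun ⟨i, k⟩ => ?_)
  by_contra hne
  have hi := hX i fun h => hne (by simp [h])
  have hk := hY (n - i + k) fun h => hne (by simp [h])
  omega

theorem PDSBdd.pdsConj {X : ℤ → A} (hX : PDSBdd X) : PDSBdd (pdsConj (⇑d) X) := by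
  obtain ⟨N, hX⟩ := pdsBdd_iff.1 hX
  refine pdsBdd_iff.2 ⟨N, fun n hn => ?_⟩
  rw [pdsConj_apply] at hn
  refine not_lt.1 fun hlt => hn (finsum_eq_zero_of_forall_eq_zero fun k => ?_)
  by_contra hne
  have hk := hX (n + k) fun h => hne (by simp [h])
  omega

theorem PDSBdd.pdsPow {X : ℤ → A} (hX : PDSBdd X) (j : ℕ) : PDSBdd (pdsPow (⇑d) X j) := by
  induction j with
  | zero => exact ⟨0, fun i hi => if_neg hi.ne'⟩
  | succ j ih => exact ih.pdsMul d hX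

theorem pdsMul_assoc_apply_left_eq_finsum {X Y Z : ℤ → A} (hX : PDSBdd X) (hY : PDSBdd Y)
    (hZ : PDSBdd Z) (n : ℤ) :
    pdsMul (⇑d) (pdsMul (⇑d) X Y) Z n = ∑ᶠ x : (ℤ × ℕ) × (ℤ × ℕ), match x with
      | ((i, k), (p, q)) => Ring.choose i k •
          ((Ring.choose p q • (X p * d^[q] (Y (i - p + q)))) * d^[k] (Z (n - i + k))) := by
  let F : (ℤ × ℕ) × (ℤ × ℕ) → A := fun ((i, k), (p, q)) => Ring.choose i k •
    ((Ring.choose p q • (X p * d^[q] (Y (i - p + q)))) * d^[k] (Z (n - i + k)))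
  have hF : HasFiniteSupport F := by
    obtain ⟨Nx, hX⟩ := pdsBdd_iff.1 hX
    obtain ⟨Ny, hY⟩ := pdsBdd_iff.1 hY
    obtain ⟨Nz, hZ⟩ := pdsBdd_iff.1 hZ
    let B := (Nx + Ny + Nz - n + 1).toNat
    refine ((Icc (n - Nz) (Nx + Ny) ×ˢ range B) ×ˢ
      (Icc (n - Ny - Nz) Nx ×ˢ range B)).finite_toSet.subset ?_
    rintro ⟨⟨i, k⟩, p, q⟩ hne
    have hp := hX p fun h => hne (by simp [F, h])
    have hm := hY (i - p + q) fun h => hne (by simp [F, h])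
    have hl := hZ (n - i + k) fun h => hne (by simp [F, h])
    simp only [coe_product, coe_Icc, coe_range, Set.mem_prod, Set.mem_Icc, Set.mem_Iio, B]
    omega
  rw [finsum_curry F hF, pdsMul_apply]
  refine finsum_congr fun ik => ?_
  rw [pdsMul_apply, finsum_mul' _ _ (hasFiniteSupport_pdsMul_summand d hX hY _ _),
    smul_finsum' _ ?_]
  exact (hasFiniteSupport_pdsMul_summand d hX hY _ _).mul_left _

theorem pdsMul_assoc_apply_left {X Y Z : ℤ → A} (hX : PDSBdd X) (hY : PDSBdd Y)
    (hZ : PDSBdd Z) (n : ℤ) :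
    pdsMul (⇑d) (pdsMul (⇑d) X Y) Z n = pdsTripleCoeff (⇑d) X Y Z n := by
  rw [pdsMul_assoc_apply_left_eq_finsum d hX hY hZ]
  refine finsum_eq_of_bijective (fun ((i, k), (p, q)) => (((p, i - p + q), q), k))
    (bijective_iff_has_inverse.2
      ⟨fun (((p, m), a), b) => ((p + m - a, b), (p, a)), ?_, ?_⟩) ?_
  · rintro ⟨⟨i, k⟩, p, q⟩
    simp only [Prod.mk.injEq, and_true]
    omega
  · rintro ⟨⟨⟨p, m⟩, a⟩, b⟩
    simp only [Prod.mk.injEq, and_true, true_and]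
    omega
  · rintro ⟨⟨i, k⟩, p, q⟩
    dsimp only
    rw [show p + (i - p + q) - q = i by ring,
      show n - p - (i - p + q) + q + k = n - i + k by ring]
    simp only [zsmul_eq_mul]
    push_cast
    ring

theorem pdsTripleCoeff_eq_finsum {X Y Z : ℤ → A} (hX : PDSBdd X) (hY : PDSBdd Y)
    (hZ : PDSBdd Z) (n : ℤ) :
    pdsTripleCoeff (⇑d) X Y Z n = ∑ᶠ z : ((ℤ × ℤ) × ℕ) × (ℕ × ℕ), match z with
      | (((p, m), a), (v, s)) => (Ring.choose p a * Ring.choose (p - a) v * Ring.choose m s) •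
          (X p * (d^[a] (Y m) * d^[v + s] (Z (n - p - m + a + (v + s))))) := by
  rw [← finsum_sum_antidiagonal]
  · refine finsum_congr fun ⟨⟨⟨p, m⟩, a⟩, b⟩ => ?_
    simp only
    rw [show p + m - a = (p - a) + m by ring, Ring.add_choose_eq _ (Commute.all _ _), mul_sum,
      sum_smul]
    refine sum_congr rfl fun ⟨v, s⟩ hvs => ?_
    obtain rfl := HasAntidiagonal.mem_antidiagonal.1 hvs
    simp only [Nat.cast_add, mul_assoc]
  · refine (hX.finite_setOf_ne_zero₃ hY hZ n).subset ?_
    rintro ⟨⟨⟨p, m⟩, a⟩, v, s⟩ hne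
    exact ⟨fun h => hne (by simp [h]), fun h => hne (by simp [h]), fun h => hne (by simp [h])⟩

theorem pdsMul_assoc_apply_right_eq_finsum {X Y Z : ℤ → A} (hX : PDSBdd X) (hY : PDSBdd Y)
    (hZ : PDSBdd Z) (n : ℤ) :
    pdsMul (⇑d) X (pdsMul (⇑d) Y Z) n = ∑ᶠ z : ((ℤ × ℤ) × ℕ) × (ℕ × ℕ), match z with
      | (((p, r), s), (u, v)) => (Ring.choose p (u + v) * Ring.choose r s * (u + v).choose u) •
          (X p * (d^[u] (Y r) * d^[v + s] (Z (n - p - r + s + (u + v))))) := by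
  let G : (ℤ × ℕ) × (ℤ × ℕ) → A := fun ((p, q), (r, s)) => Ring.choose p q •
    (X p * d^[q] (Ring.choose r s • (Y r * d^[s] (Z (n - p + q - r + s)))))
  let H : ((ℤ × ℤ) × ℕ) × (ℕ × ℕ) → A := fun (((p, r), s), (u, v)) =>
    (Ring.choose p (u + v) * Ring.choose r s * (u + v).choose u) •
      (X p * (d^[u] (Y r) * d^[v + s] (Z (n - p - r + s + (u + v)))))
  let e : (ℤ × ℕ) × (ℤ × ℕ) → ((ℤ × ℤ) × ℕ) × ℕ := fun ((p, q), (r, s)) => (((p, r), s), q)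
  have he : Bijective e := bijective_iff_has_inverse.2
    ⟨fun (((p, r), s), q) => ((p, q), (r, s)), fun _ => rfl, fun _ => rfl⟩
  have hGH (x) : G x = ∑ y ∈ antidiagonal (e x).2, H ((e x).1, y) := by
    obtain ⟨⟨p, q⟩, r, s⟩ := x
    simp only [G, H, e, iterate_map_zsmul, Derivation.iterate_apply_mul,
      ← Nat.cast_smul_eq_nsmul ℤ, smul_sum, mul_sum]
    refine sum_congr rfl fun ⟨u, v⟩ huv => ?_
    obtain rfl := HasAntidiagonal.mem_antidiagonal.1 huv
    rw [show n - p + ↑(u + v) - r + s = n - p - r + s + (u + v) by push_cast; ring]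
    simp only [iterate_add_apply, zsmul_eq_mul]
    push_cast
    ring
  have hH : HasFiniteSupport H := by
    refine (hX.finite_setOf_ne_zero₃ hY hZ n).subset ?_
    rintro ⟨⟨⟨p, r⟩, s⟩, u, v⟩ hne
    exact ⟨fun h => hne (by simp [H, h]), fun h => hne (by simp [H, h]),
      fun h => hne (by simp [H, h])⟩
  calc pdsMul (⇑d) X (pdsMul (⇑d) Y Z) n = ∑ᶠ pq, ∑ᶠ rs, G (pq, rs) := by
        rw [pdsMul_apply]
        refine finsum_congr fun pq => ?_
        have hT := hasFiniteSupport_pdsMul_summand d hY hZ (n - pq.1 + pq.2)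
          fun rs => Ring.choose rs.1 rs.2
        rw [pdsMul_apply, iterate_map_finsum d _ hT, mul_finsum' _ _ ?_, smul_finsum' _ ?_]
        · exact hT.subset fun x hx h0 => hx (by simp [h0])
        · exact hT.subset fun x hx h0 => hx (by simp [h0])
    _ = _ := finsum_finsum_eq_finsum_of_sum_antidiagonal e he hGH hH

theorem pdsMul_assoc_apply_right {X Y Z : ℤ → A} (hX : PDSBdd X) (hY : PDSBdd Y)
    (hZ : PDSBdd Z) (n : ℤ) :
    pdsMul (⇑d) X (pdsMul (⇑d) Y Z) n = pdsTripleCoeff (⇑d) X Y Z n := by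
  rw [pdsMul_assoc_apply_right_eq_finsum d hX hY hZ, pdsTripleCoeff_eq_finsum d hX hY hZ]
  refine finsum_eq_of_bijective (fun (((p, r), s), (u, v)) => (((p, r), u), (v, s)))
    (bijective_iff_has_inverse.2
      ⟨fun (((p, r), u), (v, s)) => (((p, r), s), (u, v)), fun _ => rfl, fun _ => rfl⟩) ?_
  rintro ⟨⟨⟨p, r⟩, s⟩, u, v⟩
  have h := Ring.choose_smul_choose p (Nat.le_add_right u v)
  rw [Nat.add_sub_cancel_left, nsmul_eq_mul] at h
  dsimp only
  rw [show n - p - r + s + (u + v) = n - p - r + u + (v + s) by ring, mul_right_comm,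
    mul_comm (Ring.choose p (u + v)), h]

theorem pdsMul_assoc {X Y Z : ℤ → A} (hX : PDSBdd X) (hY : PDSBdd Y) (hZ : PDSBdd Z) :
    pdsMul (⇑d) (pdsMul (⇑d) X Y) Z = pdsMul (⇑d) X (pdsMul (⇑d) Y Z) :=
  funext fun n => by rw [pdsMul_assoc_apply_left d hX hY hZ, pdsMul_assoc_apply_right d hX hY hZ]

theorem pdsConjMulCoeff_eq_finsum {X Y : ℤ → A} (hX : PDSBdd X) (hY : PDSBdd Y) (n : ℤ) :
    pdsConjMulCoeff (⇑d) X Y n = ∑ᶠ z : (ℤ × ℕ) × (ℕ × ℕ), match z with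
      | ((i, α), (v, s)) => (((n + α + v).negOnePow : ℤ) * Ring.choose (n + α + v) (α + v)
          * (α + v).choose α * Ring.choose i s) •
            (d^[α] (X i) * d^[v + s] (Y (n - i + α + (v + s)))) := by
  rw [← finsum_sum_antidiagonal]
  · refine finsum_congr fun ⟨⟨i, α⟩, β⟩ => ?_
    simp only
    rw [negOnePow_mul_choose_mul_choose_eq_sum, sum_smul]
    refine sum_congr rfl fun ⟨v, s⟩ hvs => ?_
    obtain rfl := HasAntidiagonal.mem_antidiagonal.1 hvs
    simp only [Nat.cast_add]
  · refine (hX.finite_setOf_ne_zero' hY n).subset ?_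
    rintro ⟨⟨i, α⟩, v, s⟩ hne
    exact ⟨fun h => hne (by simp [h]), fun h => hne (by simp [h])⟩

theorem pdsConjMulCoeff_eq_finsum' {X Y : ℤ → A} (hX : PDSBdd X) (hY : PDSBdd Y) (n : ℤ) :
    pdsConjMulCoeff (⇑d) X Y n = ∑ᶠ z : (ℤ × ℕ) × (ℕ × ℕ), match z with
      | ((i, β), (q, b)) => (Ring.choose (n - i + (q + b)) q * ((i.negOnePow : ℤ) * Ring.choose i b)
          * (((n - i + β + (q + b)).negOnePow : ℤ) * Ring.choose (n - i + β + (q + b)) β)) •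
            (d^[q + b] (X i) * d^[β] (Y (n - i + β + (q + b)))) := by
  let e : (ℤ × ℕ) × ℕ ≃ (ℤ × ℕ) × ℕ :=
    { toFun := fun ((i, β), α) => ((i, α), β), invFun := fun ((i, α), β) => ((i, β), α),
      left_inv := fun _ => rfl, right_inv := fun _ => rfl }
  rw [pdsConjMulCoeff, ← finsum_comp_equiv e, ← finsum_sum_antidiagonal]
  · refine finsum_congr fun ⟨⟨i, β⟩, α⟩ => ?_
    simp only [e, Equiv.coe_fn_mk]
    rw [negOnePow_mul_choose_mul_choose_eq_sum', sum_smul]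
    refine sum_congr rfl fun ⟨q, b⟩ hqb => ?_
    obtain rfl := HasAntidiagonal.mem_antidiagonal.1 hqb
    rw [show n - i + ↑(q + b) + β = n - i + β + (q + b) by push_cast; ring, Nat.cast_add]
  · refine (hX.finite_setOf_ne_zero' hY n).subset ?_
    rintro ⟨⟨i, β⟩, q, b⟩ hne
    exact ⟨fun h => hne (by simp [h]), fun h => hne (by simp [h])⟩

theorem pdsConj_pdsMul_apply_eq_finsum {X Y : ℤ → A} (hX : PDSBdd X) (hY : PDSBdd Y) (n : ℤ) :
    pdsConj (⇑d) (pdsMul (⇑d) X Y) n = ∑ᶠ z : (ℤ × ℕ) × (ℕ × ℕ), match z with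
      | ((i, s), (u, v)) => (((n + u + v).negOnePow : ℤ) * Ring.choose (n + u + v) (u + v)
          * (u + v).choose u * Ring.choose i s) •
            (d^[u] (X i) * d^[v + s] (Y (n - i + s + (u + v)))) := by
  let G : ℕ × (ℤ × ℕ) → A := fun (k, (i, s)) => (((n + k).negOnePow : ℤ) * Ring.choose (n + k) k) •
    d^[k] (Ring.choose i s • (X i * d^[s] (Y (n + k - i + s))))
  let H : (ℤ × ℕ) × (ℕ × ℕ) → A := fun ((i, s), (u, v)) =>
    (((n + u + v).negOnePow : ℤ) * Ring.choose (n + u + v) (u + v) * (u + v).choose u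
      * Ring.choose i s) • (d^[u] (X i) * d^[v + s] (Y (n - i + s + (u + v))))
  let e : ℕ × (ℤ × ℕ) → (ℤ × ℕ) × ℕ := fun (k, is) => (is, k)
  have he : Bijective e :=
    bijective_iff_has_inverse.2 ⟨fun (is, k) => (k, is), fun _ => rfl, fun _ => rfl⟩
  have hGH (x) : G x = ∑ y ∈ antidiagonal (e x).2, H ((e x).1, y) := by
    obtain ⟨k, i, s⟩ := x
    simp only [G, H, e, iterate_map_zsmul, Derivation.iterate_apply_mul,
      ← Nat.cast_smul_eq_nsmul ℤ, smul_sum]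
    refine sum_congr rfl fun ⟨u, v⟩ huv => ?_
    obtain rfl := HasAntidiagonal.mem_antidiagonal.1 huv
    rw [show n + ↑(u + v) = n + u + v by push_cast; ring,
      show n + u + v - i + s = n - i + s + (u + v) by ring]
    simp only [iterate_add_apply, zsmul_eq_mul]
    push_cast
    ring
  have hH : HasFiniteSupport H := by
    refine (hX.finite_setOf_ne_zero' hY n).subset ?_
    rintro ⟨⟨i, s⟩, u, v⟩ hne
    exact ⟨fun h => hne (by simp [H, h]), fun h => hne (by simp [H, h])⟩
  calc pdsConj (⇑d) (pdsMul (⇑d) X Y) n = ∑ᶠ k, ∑ᶠ is, G (k, is) := by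
        rw [pdsConj_apply]
        refine finsum_congr fun k => ?_
        have hT := hasFiniteSupport_pdsMul_summand d hX hY (n + k) fun is => Ring.choose is.1 is.2
        rw [pdsMul_apply, iterate_map_finsum d _ hT, smul_finsum' _ ?_]
        exact hT.subset fun x hx h0 => hx (by simp [h0])
    _ = _ := finsum_finsum_eq_finsum_of_sum_antidiagonal e he hGH hH

theorem pdsConj_pdsMul_apply {X Y : ℤ → A} (hX : PDSBdd X) (hY : PDSBdd Y) (n : ℤ) :
    pdsConj (⇑d) (pdsMul (⇑d) X Y) n = pdsConjMulCoeff (⇑d) X Y n := by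
  rw [pdsConj_pdsMul_apply_eq_finsum d hX hY, pdsConjMulCoeff_eq_finsum d hX hY]
  refine finsum_eq_of_bijective (fun ((i, s), (u, v)) => ((i, u), (v, s)))
    (bijective_iff_has_inverse.2
      ⟨fun ((i, u), (v, s)) => ((i, s), (u, v)), fun _ => rfl, fun _ => rfl⟩) ?_
  rintro ⟨⟨i, s⟩, u, v⟩
  dsimp only
  rw [show n - i + s + (u + v) = n - i + u + (v + s) by ring]

theorem pdsMul_pdsConj_apply_eq_finsum {X Y : ℤ → A} (hX : PDSBdd X) (hY : PDSBdd Y) (n : ℤ) :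
    pdsMul (⇑d) (pdsConj (⇑d) Y) (pdsConj (⇑d) X) n = ∑ᶠ z : (ℤ × ℕ) × (ℕ × ℕ), match z with
      | ((p, q), (a, b)) => (Ring.choose p q * (((p + a).negOnePow : ℤ) * Ring.choose (p + a) a)
          * (((n - p + q + b).negOnePow : ℤ) * Ring.choose (n - p + q + b) b)) •
            (d^[a] (Y (p + a)) * d^[q + b] (X (n - p + q + b))) := by
  let G : (ℤ × ℕ) × (ℕ × ℕ) → A := fun ((p, q), (a, b)) =>
    (Ring.choose p q * (((p + a).negOnePow : ℤ) * Ring.choose (p + a) a)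
      * (((n - p + q + b).negOnePow : ℤ) * Ring.choose (n - p + q + b) b)) •
        (d^[a] (Y (p + a)) * d^[q + b] (X (n - p + q + b)))
  have hG : HasFiniteSupport G := by
    obtain ⟨Nx, hX⟩ := pdsBdd_iff.1 hX
    obtain ⟨Ny, hY⟩ := pdsBdd_iff.1 hY
    let B := (Nx + Ny - n + 1).toNat
    refine ((Icc (n - Nx) Ny ×ˢ range B) ×ˢ (range B ×ˢ range B)).finite_toSet.subset ?_
    rintro ⟨⟨p, q⟩, a, b⟩ hne
    have hi := hY (p + a) fun h => hne (by simp [G, h])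
    have hj := hX (n - p + q + b) fun h => hne (by simp [G, h])
    simp only [coe_product, coe_Icc, coe_range, Set.mem_prod, Set.mem_Icc, Set.mem_Iio, B]
    omega
  calc pdsMul (⇑d) (pdsConj (⇑d) Y) (pdsConj (⇑d) X) n = ∑ᶠ pq, ∑ᶠ ab, G (pq, ab) := by
        rw [pdsMul_apply]
        refine finsum_congr fun ⟨p, q⟩ => ?_
        have hTY := hasFiniteSupport_pdsConj_summand d hY p
          fun a => ((p + a).negOnePow : ℤ) * Ring.choose (p + a) a
        have hTX := hasFiniteSupport_pdsConj_summand d hX (n - p + q)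
          fun b => ((n - p + q + b).negOnePow : ℤ) * Ring.choose (n - p + q + b) b
        rw [pdsConj_apply, pdsConj_apply, iterate_map_finsum d _ hTX, finsum_mul' _ _ hTY,
          smul_finsum' _ (hTY.subset fun x hx h0 => hx (by simp [h0])),
          finsum_curry _ (support_along_fiber_finite_of_finite G (p, q) hG)]
        refine finsum_congr fun a => ?_
        rw [mul_finsum' _ _ (hTX.subset fun x hx h0 => hx (by simp [h0])), smul_finsum' _ ?_]
        · refine finsum_congr fun b => ?_
          simp only [G, iterate_map_zsmul, iterate_add_apply]
          simp only [zsmul_eq_mul]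
          push_cast
          ring
        · exact hTX.subset fun x hx h0 => hx (by simp [h0])
    _ = ∑ᶠ x, G x := (finsum_curry G hG).symm

theorem pdsMul_pdsConj_apply {X Y : ℤ → A} (hX : PDSBdd X) (hY : PDSBdd Y) (n : ℤ) :
    pdsMul (⇑d) (pdsConj (⇑d) Y) (pdsConj (⇑d) X) n = pdsConjMulCoeff (⇑d) X Y n := by
  rw [pdsMul_pdsConj_apply_eq_finsum d hX hY, pdsConjMulCoeff_eq_finsum' d hX hY]
  refine finsum_eq_of_bijective (fun ((p, q), (a, b)) => ((n - p + q + b, a), (q, b)))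
    (bijective_iff_has_inverse.2 ⟨fun ((i, β), (q, b)) => ((n - i + q + b, q), (β, b)), ?_, ?_⟩) ?_
  · rintro ⟨⟨p, q⟩, a, b⟩
    simp only [Prod.mk.injEq, and_true]
    omega
  · rintro ⟨⟨i, β⟩, q, b⟩
    simp only [Prod.mk.injEq, and_true]
    omega
  · rintro ⟨⟨p, q⟩, a, b⟩
    dsimp only
    rw [show n - (n - p + q + b) + (q + b) = p by ring,
      show n - (n - p + q + b) + a + (q + b) = p + a by ring, mul_right_comm (Ring.choose p q),
      mul_comm (d^[q + b] _)]

theorem pdsConj_pdsMul {X Y : ℤ → A} (hX : PDSBdd X) (hY : PDSBdd Y) :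
    pdsConj (⇑d) (pdsMul (⇑d) X Y) = pdsMul (⇑d) (pdsConj (⇑d) Y) (pdsConj (⇑d) X) :=
  funext fun n => by rw [pdsConj_pdsMul_apply d hX hY, pdsMul_pdsConj_apply d hX hY]

theorem pdsMul_neg_right (X Y : ℤ → A) : pdsMul (⇑d) X (-Y) = -pdsMul (⇑d) X Y := by
  funext n
  simp only [pdsMul_apply, Pi.neg_apply, iterate_map_neg, mul_neg, smul_neg, finsum_neg_distrib]

theorem pdsPow_neg (X : ℤ → A) (j : ℕ) : pdsPow (⇑d) (-X) j = (-1 : ℤ) ^ j • pdsPow (⇑d) X j := by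
  induction j with
  | zero => simp [pdsPow]
  | succ j ih =>
    rw [pdsPow, ih, pdsMul_neg_right, pow_succ]
    rcases neg_one_pow_eq_or ℤ j with h | h <;> simp [h, pdsMul_neg_left, pdsPow]

theorem pdsPow_succ_mul_comm {X : ℤ → A} (hX : PDSBdd X) (j : ℕ) :
    pdsMul (⇑d) (pdsPow (⇑d) X (j + 1)) X = pdsMul (⇑d) X (pdsPow (⇑d) X (j + 1)) := by
  induction j with
  | zero => rw [pdsPow_one]
  | succ j ih =>
    conv_lhs => rw [pdsPow, ih, pdsMul_assoc d hX (hX.pdsPow d _) hX]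
    rfl

theorem pdsPow_pdsConj {X : ℤ → A} (hX : PDSBdd X) (j : ℕ) :
    pdsPow (⇑d) (pdsConj (⇑d) X) (j + 1) = pdsConj (⇑d) (pdsPow (⇑d) X (j + 1)) := by
  induction j with
  | zero => rw [pdsPow_one, pdsPow_one]
  | succ j ih =>
    rw [pdsPow, ih, ← pdsConj_pdsMul d hX (hX.pdsPow d _), ← pdsPow_succ_mul_comm d hX]
    rfl

theorem pdsPow_conjugate {S Sinv C : ℤ → A} (hS : PDSBdd S) (hSinv : PDSBdd Sinv)
    (hC : PDSBdd C) (hSl : pdsMul (⇑d) S Sinv = pdsOne) (j : ℕ) :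
    pdsPow (⇑d) (pdsMul (⇑d) (pdsMul (⇑d) Sinv C) S) (j + 1) =
      pdsMul (⇑d) (pdsMul (⇑d) Sinv (pdsPow (⇑d) C (j + 1))) S := by
  induction j with
  | zero => rw [pdsPow_one, pdsPow_one]
  | succ j ih =>
    have hP := hC.pdsPow d (j + 1)
    rw [pdsPow, ih, pdsMul_assoc d (hSinv.pdsMul d hP) hS ((hSinv.pdsMul d hC).pdsMul d hS),
      pdsMul_assoc d hSinv hC hS, ← pdsMul_assoc d hS hSinv (hC.pdsMul d hS), hSl, pdsOne_mul,
      ← pdsMul_assoc d (hSinv.pdsMul d hP) hC hS, pdsMul_assoc d hSinv hP hC]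
    rfl

theorem mul_iterate_sub_mem_range (k : ℕ) (a b : A) :
    a * d^[k] b - (-1 : ℤ) ^ k • (d^[k] a * b) ∈ LinearMap.range (d : A →ₗ[ℤ] A) := by
  induction k generalizing a with
  | zero => simp
  | succ k ih =>
    have hd : d (a * d^[k] b) ∈ LinearMap.range (d : A →ₗ[ℤ] A) := ⟨_, rfl⟩
    convert sub_mem hd (ih (d a)) using 1
    rw [iterate_succ_apply', iterate_succ_apply, Derivation.leibniz, pow_succ, smul_eq_mul,
      smul_eq_mul, mul_neg_one, neg_smul]
    ring

theorem pdsRes_pdsMul_sub_pdsRes_pdsMul_mem_range {X Y : ℤ → A} (hX : PDSBdd X) (hY : PDSBdd Y) :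
    pdsRes (pdsMul (⇑d) X Y) - pdsRes (pdsMul (⇑d) Y X) ∈ LinearMap.range (d : A →ₗ[ℤ] A) := by
  -- substitute `j = -1 - i + k` in `res (Y X)`; then `C(j, k) = (-1)^k C(i, k)`
  have hswap : pdsRes (pdsMul (⇑d) Y X) = ∑ᶠ ik : ℤ × ℕ, Ring.choose ik.1 ik.2 •
      ((-1 : ℤ) ^ ik.2 • (d^[ik.2] (X ik.1) * Y (-1 - ik.1 + ik.2))) := by
    rw [pdsRes, pdsMul_apply]
    let e : ℤ × ℕ → ℤ × ℕ := fun (j, k) => (-1 - j + k, k)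
    have he (x) : e (e x) = x := Prod.ext (by simp only [e]; ring) rfl
    refine finsum_eq_of_bijective e (bijective_iff_has_inverse.2 ⟨e, he, he⟩) fun ⟨j, k⟩ => ?_
    have h := Int.choose_add_sub_one (j + 1 - k) k
    rw [show j + 1 - k + k - 1 = j by ring, show -(j + 1 - k) = -1 - j + k by ring,
      Int.coe_negOnePow_natCast] at h
    simp only [e]
    rw [show -1 - (-1 - j + k) + k = j by ring, h]
    simp only [zsmul_eq_mul]
    push_cast
    ring
  have hf : HasFiniteSupport fun ik : ℤ × ℕ => Ring.choose ik.1 ik.2 •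
      ((-1 : ℤ) ^ ik.2 • (d^[ik.2] (X ik.1) * Y (-1 - ik.1 + ik.2))) :=
    (hX.finite_setOf_ne_zero hY (-1)).subset fun _ hne =>
      ⟨fun h => hne (by simp [h]), fun h => hne (by simp [h])⟩
  rw [pdsRes, pdsMul_apply, hswap,
    ← finsum_sub_distrib (hasFiniteSupport_pdsMul_summand d hX hY _ _) hf]
  refine finsum_induction (· ∈ LinearMap.range (d : A →ₗ[ℤ] A)) (zero_mem _)
    (fun _ _ => add_mem) fun ⟨i, k⟩ => ?_
  rw [← smul_sub]
  exact Submodule.smul_mem _ _ (mul_iterate_sub_mem_range d k (X i) (Y (-1 - i + k)))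

theorem pdsRes_conjugate_sub_mem_range {S Sinv C : ℤ → A} (hS : PDSBdd S) (hSinv : PDSBdd Sinv)
    (hC : PDSBdd C) (hSl : pdsMul (⇑d) S Sinv = pdsOne) :
    pdsRes (pdsMul (⇑d) (pdsMul (⇑d) Sinv C) S) - pdsRes C ∈ LinearMap.range (d : A →ₗ[ℤ] A) := by
  have h := pdsRes_pdsMul_sub_pdsRes_pdsMul_mem_range d (hSinv.pdsMul d hC) hS
  rwa [← pdsMul_assoc d hS hSinv hC, hSl, pdsOne_mul] at h

end

theorem res_pow_add_res_pow_mem_range_d_general (d : Derivation ℤ A A) (R S Sinv R₂ : ℤ → A)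
    (hR : PDSBdd R) (hS : PDSBdd S) (hSinv : PDSBdd Sinv)
    (hSl : pdsMul (⇑d) S Sinv = pdsOne)
    (hR₂ : R₂ = -(pdsMul (⇑d) (pdsMul (⇑d) Sinv (pdsConj (⇑d) R)) S)) :
    ∀ j : ℕ, 1 ≤ j →
      pdsRes (pdsPow (⇑d) R j) + ((-1 : ℤ) ^ j) • pdsRes (pdsPow (⇑d) R₂ j)
        ∈ Set.range (⇑d) := by
  intro j hj
  obtain ⟨j, rfl⟩ := Nat.exists_eq_add_of_le' hj
  have hP := hR.pdsPow d (j + 1)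
  have key := pdsRes_conjugate_sub_mem_range d hS hSinv (hP.pdsConj d) hSl
  rw [pdsRes_pdsConj, sub_neg_eq_add, ← pdsPow_pdsConj d hR,
    ← pdsPow_conjugate d hS hSinv (hR.pdsConj d) hSl] at key
  obtain ⟨a, ha⟩ := key
  refine ⟨a, ?_⟩
  simp only [pdsRes] at ha ⊢
  rw [hR₂, pdsPow_neg, Pi.smul_apply, smul_smul, ← mul_pow, neg_one_mul, neg_neg, one_pow,
    one_smul, add_comm]
  exact ha

/-- with `S` invertible and `R₂ = −S⁻¹ R⁺ S`, for every `j ≥ 1`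
one has `res(R^j) + (−1)^j res(R₂^j) ∈ Im D`. -/
theorem res_pow_add_res_pow_mem_range_d (d : Derivation ℤ A A) (R S Sinv R₂ : ℤ → A)
    (hR : PDSBdd R) (hS : PDSBdd S) (hSinv : PDSBdd Sinv)
    (hSl : pdsMul (⇑d) S Sinv = pdsOne) (hSr : pdsMul (⇑d) Sinv S = pdsOne)
    (hR₂ : R₂ = -(pdsMul (⇑d) (pdsMul (⇑d) Sinv (pdsConj (⇑d) R)) S)) :
    ∀ j : ℕ, 1 ≤ j →
      pdsRes (pdsPow (⇑d) R j) + ((-1 : ℤ) ^ j) • pdsRes (pdsPow (⇑d) R₂ j)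
        ∈ Set.range (⇑d) :=
  res_pow_add_res_pow_mem_range_d_general d R S Sinv R₂ hR hS hSinv hSl hR₂

end
end

section
/- For the system u_t = v, v_t = F with F = u4 + 2 u2 v + 2 u1² u2, the pair s = (s¹, s²) with s¹ = v2 + ½ u2² + u1² v + ½ v² + (1/6) u1⁴ and s² = u6 + 3 u2 v2 + 4 u3 v1 + 3 v u4 + 3 u1² u4 + 2 u1 v v1 + (2/3) u1³ v1 + 12 u1 u2 u3 + 4 u1² u2 v + 2 u2 v² + 2 u1⁴ u2 + 4 u2³ is an infinitesimal symmetry: D_t(s¹) = s² and D_t(s²) = Σ_{i=0}^{4} (∂F/∂u_i) D^i(s¹) + (∂F/∂v) s². -/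
theorem Derivation.map_ofNat {R A M : Type*} [CommSemiring R] [CommSemiring A]
    [AddCommMonoid M] [Algebra R A] [Module A M] [Module R M] (D : Derivation R A M)
    (n : ℕ) [n.AtLeastTwo] : D (ofNat(n) : A) = 0 :=
  D.map_natCast n

/-- for the system `u_t = v, v_t = F` with
`F = u₄ + 2 u₂ v + 2 u₁² u₂`, the pair `s = (s¹, s²)` below is an infinitesimal
symmetry: `D_t(s¹) = s²` and
`D_t(s²) = ∑_{i=0}^{4} (∂F/∂u_i) D^i(s¹) + (∂F/∂v) s²`, where
`∂F/∂u₁ = 4u₁u₂`, `∂F/∂u₂ = 2v + 2u₁²`, `∂F/∂u₄ = 1`, `∂F/∂v = 2u₂`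
(all other partial derivatives of `F` vanish). -/
theorem gu3_symmetry
    {A : Type*} [CommRing A] [Algebra ℚ A]
    (D Dt : Derivation ℚ A A) (u v : ℕ → A)
    (hDu : ∀ i, D (u i) = u (i + 1)) (hDv : ∀ i, D (v i) = v (i + 1))
    (hDtu : ∀ i, Dt (u i) = v i)
    (hDtv : ∀ i, Dt (v i) =
      (⇑D)^[i] (u 4 + 2 * u 2 * v 0 + 2 * (u 1) ^ 2 * u 2))
    (s1 s2 : A)
    (hs1 : s1 = v 2 + (1/2 : ℚ) • (u 2) ^ 2 + (u 1) ^ 2 * v 0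
        + (1/2 : ℚ) • (v 0) ^ 2 + (1/6 : ℚ) • (u 1) ^ 4)
    (hs2 : s2 = u 6 + 3 * u 2 * v 2 + 4 * u 3 * v 1 + 3 * v 0 * u 4
        + 3 * (u 1) ^ 2 * u 4 + 2 * u 1 * v 0 * v 1
        + (2/3 : ℚ) • ((u 1) ^ 3 * v 1) + 12 * u 1 * u 2 * u 3
        + 4 * (u 1) ^ 2 * u 2 * v 0 + 2 * u 2 * (v 0) ^ 2
        + 2 * (u 1) ^ 4 * u 2 + 4 * (u 2) ^ 3) :
    Dt s1 = s2 ∧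
    Dt s2 = 4 * u 1 * u 2 * D s1 + (2 * v 0 + 2 * (u 1) ^ 2) * (⇑D)^[2] s1
        + (⇑D)^[4] s1 + 2 * u 2 * s2 := by
  subst hs1 hs2
  simp only [map_add, Derivation.leibniz, Derivation.leibniz_pow, Derivation.map_smul,
    Derivation.map_ofNat, smul_eq_mul, nsmul_eq_mul, Nat.cast_ofNat, Nat.add_one_sub_one, pow_one,
    mul_zero, add_zero, hDu, hDv, hDtu, hDtv,
    Function.iterate_succ_apply', Function.iterate_zero_apply, Nat.reduceAdd]
  -- `ring` cannot clear the ℚ-scalars `1/2`, `1/6`, `2/3` in a ring that is merely a ℚ-algebra.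
  constructor <;> algebra
end

section
/- Consider the operator Riccati equation T_t + T² − V T = U, where U = Σ_{i=0}^{2k} 𝔲_i D^i and V = Σ_{i=0}^{k-1} 𝔳_i D^i are differential operators over a differential ring and T = Σ_{j≤k} τ_j D^j is a formal pseudo-differential series of order k. Then the leading coefficient of any solution satisfies τ_k² = 𝔲_{2k}, and for each fixed choice of square root τ_k of 𝔲_{2k} (assumed invertible), each subsequent coefficient τ_j (j < k) is uniquely determined by an equation of the form 2 τ_k τ_j = c_j, where c_j is a differential expression in τ_k, …, τ_{j+1} and the coefficients of U and V. In particular the equation has exactly two solutions of order k, corresponding to the two square roots of 𝔲_{2k}. -/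
/-!
Formal pseudo-differential series over a commutative differential ring `(A, d)`.
A series `X = ∑_{i ≤ N} a_i D^i` is represented by its coefficient function
`ℤ → A` (the coefficient of `D^i`), with support bounded above.
-/

noncomputable section

variable {A : Type*} [CommRing A]

/-!
Comparing coefficients of `D^(2k)` gives `τ_k² = 𝔲_{2k}`, because `T_t` and `V T` have order
below `2k`. For `m < k`, the coefficient of `D^(k+m)` in `T_t + T² − V T` involves `τ_m` only
through the term `2 τ_k τ_m` of `T²`: every other contribution is built from `τ_j` with `j > m`
(this uses `k ≥ 1`, so that `T_t` stays out of the way). As `2 τ_k` is invertible, the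
coefficients are determined one at a time in decreasing order, which gives uniqueness, and
solving these equations successively produces the solution.
-/

open Finset

lemma gbinom_zero (n : ℤ) : gbinom n 0 = 1 := by
  simp [gbinom]

section pdsMul

variable {d : A → A}

lemma pdsMul_eq_sum (hd : d 0 = 0) {X Y : ℤ → A} {a b : ℤ}
    (hX : ∀ i, a < i → X i = 0) (hY : ∀ j, b < j → Y j = 0) (n : ℤ) :
    pdsMul d X Y n =
      ∑ p ∈ Icc (n - b) a ×ˢ Icc 0 (a + b - n).toNat,
        gbinom p.1 p.2 • (X p.1 * d^[p.2] (Y (n - p.1 + p.2))) := by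
  apply finsum_eq_finsetSum_of_support_subset
  rintro ⟨i, l⟩ hp
  by_contra hmem
  apply hp
  by_cases hXi : X i = 0
  · simp [hXi]
  have hY' : Y (n - i + l) = 0 := by
    by_contra hYj
    have hi : i ≤ a := le_of_not_gt fun h => hXi (hX i h)
    have hj : n - i + l ≤ b := le_of_not_gt fun h => hYj (hY _ h)
    exact hmem (by simp only [coe_product, Set.mem_prod, mem_coe, mem_Icc]; omega)
  simp [hY', Function.iterate_fixed hd]

lemma pdsMul_apply_congr (hd : d 0 = 0) {X X' Y Y' : ℤ → A} {a b n : ℤ}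
    (hX : ∀ i, a < i → X i = 0) (hX' : ∀ i, a < i → X' i = 0)
    (hY : ∀ j, b < j → Y j = 0) (hY' : ∀ j, b < j → Y' j = 0)
    (hXX' : ∀ i, n - b ≤ i → X i = X' i) (hYY' : ∀ j, n - a ≤ j → Y j = Y' j) :
    pdsMul d X Y n = pdsMul d X' Y' n := by
  rw [pdsMul_eq_sum hd hX hY, pdsMul_eq_sum hd hX' hY']
  refine sum_congr rfl fun ⟨i, l⟩ hp => ?_
  simp only [mem_product, mem_Icc] at hp
  rw [hXX' i (by omega), hYY' _ (by omega)]

lemma pdsMul_apply_of_lt (hd : d 0 = 0) {X Y : ℤ → A} {a b n : ℤ}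
    (hX : ∀ i, a < i → X i = 0) (hY : ∀ j, b < j → Y j = 0) (hn : a + b < n) :
    pdsMul d X Y n = 0 := by
  rw [pdsMul_eq_sum hd hX hY, Icc_eq_empty (by omega), empty_product, sum_empty]

lemma pdsMul_apply_add (hd : d 0 = 0) {X Y : ℤ → A} {a b : ℤ}
    (hX : ∀ i, a < i → X i = 0) (hY : ∀ j, b < j → Y j = 0) :
    pdsMul d X Y (a + b) = X a * Y b := by
  rw [pdsMul_eq_sum hd hX hY, add_sub_cancel_right, sub_self, Int.toNat_zero, Icc_self,
    Icc_self, singleton_product_singleton, sum_singleton, gbinom_zero, one_smul]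
  simp only [Nat.cast_zero, add_zero, add_sub_cancel_left, Function.iterate_zero, id_eq]

lemma pdsMul_self_sub_pdsMul_self (hd : d 0 = 0) {P Q : ℤ → A} {a m : ℤ}
    (hP : ∀ i, a < i → P i = 0) (hQ : ∀ i, a < i → Q i = 0) (hm : m < a)
    (hPQ : ∀ j, m < j → P j = Q j) :
    pdsMul d P P (a + m) - pdsMul d Q Q (a + m) = 2 * P a * (P m - Q m) := by
  rw [pdsMul_eq_sum hd hP hP, pdsMul_eq_sum hd hQ hQ, ← sum_sub_distrib,
    sum_eq_add_of_mem (m, 0) (a, 0) (by simp only [mem_product, mem_Icc]; omega)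
      (by simp only [mem_product, mem_Icc]; omega) (by simp only [ne_eq, Prod.mk.injEq]; omega)]
  · simp only [gbinom_zero, one_smul, Nat.cast_zero, add_zero, add_sub_cancel_right,
      add_sub_cancel_left, Function.iterate_zero, id_eq]
    rw [← hPQ a hm]
    ring
  · rintro ⟨i, l⟩ hp hne
    simp only [mem_product, mem_Icc] at hp
    simp only [ne_eq, Prod.mk.injEq, not_and] at hne
    by_cases hvanish : a < a + m - i + l
    · simp [hP _ hvanish, hQ _ hvanish, Function.iterate_fixed hd]
    · rw [hPQ i (by omega), hPQ (a + m - i + l) (by omega), sub_self]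

end pdsMul

def riccati (D Dt : Derivation ℤ A A) (V T : ℤ → A) : ℤ → A :=
  (fun n => Dt (T n)) + pdsMul (⇑D) T T - pdsMul (⇑D) V T

section riccati

variable (D Dt : Derivation ℤ A A) {V T T' : ℤ → A} {k : ℤ}

lemma riccati_apply (n : ℤ) :
    riccati D Dt V T n = Dt (T n) + pdsMul (⇑D) T T n - pdsMul (⇑D) V T n := rfl

lemma riccati_apply_of_lt (hk : 0 ≤ k) (hV : ∀ i, k - 1 < i → V i = 0)
    (hT : ∀ j, k < j → T j = 0) {n : ℤ} (hn : 2 * k < n) : riccati D Dt V T n = 0 := by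
  rw [riccati_apply, hT n (by omega), map_zero, pdsMul_apply_of_lt (map_zero D) hT hT (by omega),
    pdsMul_apply_of_lt (map_zero D) hV hT (by omega), add_zero, sub_zero]

lemma riccati_apply_two_mul (hk : 0 < k) (hV : ∀ i, k - 1 < i → V i = 0)
    (hT : ∀ j, k < j → T j = 0) :
    riccati D Dt V T (2 * k) = T k * T k := by
  rw [riccati_apply, hT _ (by omega), map_zero, two_mul, pdsMul_apply_add (map_zero D) hT hT,
    pdsMul_apply_of_lt (map_zero D) hV hT (by omega), zero_add, sub_zero]

lemma riccati_apply_congr (hk : 0 ≤ k) (hV : ∀ i, k - 1 < i → V i = 0)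
    (hT : ∀ j, k < j → T j = 0) (hT' : ∀ j, k < j → T' j = 0) {n : ℤ}
    (h : ∀ j, n - k ≤ j → T j = T' j) :
    riccati D Dt V T n = riccati D Dt V T' n := by
  rw [riccati_apply, riccati_apply, h n (by omega),
    pdsMul_apply_congr (map_zero D) hT hT' hT hT' h h,
    pdsMul_apply_congr (map_zero D) hV hV hT hT' (fun _ _ => rfl) fun j hj => h j (by omega)]

lemma riccati_apply_add_sub (hk : 0 < k) (hV : ∀ i, k - 1 < i → V i = 0)
    (hT : ∀ j, k < j → T j = 0) (hT' : ∀ j, k < j → T' j = 0) {m : ℤ} (hm : m < k)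
    (h : ∀ j, m < j → T j = T' j) :
    riccati D Dt V T (k + m) - riccati D Dt V T' (k + m) = 2 * T k * (T m - T' m) := by
  have hVT : pdsMul (⇑D) V T (k + m) = pdsMul (⇑D) V T' (k + m) :=
    pdsMul_apply_congr (map_zero D) hV hV hT hT' (fun _ _ => rfl) fun j hj => h j (by omega)
  rw [riccati_apply, riccati_apply, h (k + m) (by omega), hVT,
    ← pdsMul_self_sub_pdsMul_self (map_zero D) hT hT' hm h]
  ring

lemma eq_of_riccati_eq (hk : 0 < k) (hV : ∀ i, k - 1 < i → V i = 0)
    (hT : ∀ j, k < j → T j = 0) (hT' : ∀ j, k < j → T' j = 0) (hTk : T k = T' k)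
    (hunit : IsUnit (2 * T k))
    (h : riccati D Dt V T = riccati D Dt V T') : T = T' := by
  have above : ∀ i : ℕ, ∀ j, k - i ≤ j → T j = T' j := by
    intro i
    induction i with
    | zero =>
      intro j hj
      obtain rfl | hkj := (show j = k ∨ k < j by omega)
      · exact hTk
      · rw [hT j hkj, hT' j hkj]
    | succ i ih =>
      intro j hj
      obtain hj | rfl := (show k - i ≤ j ∨ j = k - (i + 1) by omega)
      · exact ih j hj
      · have hdiff := riccati_apply_add_sub D Dt hk hV hT hT' (m := k - (i + 1)) (by omega)
          fun j hj => ih j (by omega)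
        rw [congrFun h, sub_self, eq_comm] at hdiff
        exact sub_eq_zero.mp (hunit.mul_right_eq_zero.mp hdiff)
  funext j
  exact above (k - j).toNat j (by omega)

end riccati

/-- Step `i + 1` adds to the coefficient of `D^(k-(i+1))` the correction, read off from
`riccati_apply_add_sub`, that makes the coefficient of `D^(2k-(i+1))` of the equation hold. -/
def riccatiApprox (D Dt : Derivation ℤ A A) (U V : ℤ → A) (k : ℤ) (τ : A) : ℕ → ℤ → A
  | 0 => Pi.single k τ
  | i + 1 => Function.update (riccatiApprox D Dt U V k τ i) (k - (i + 1))
      (riccatiApprox D Dt U V k τ i (k - (i + 1)) + Ring.inverse (2 * τ) *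
        (U (2 * k - (i + 1)) - riccati D Dt V (riccatiApprox D Dt U V k τ i) (2 * k - (i + 1))))

/-- The coefficient of `D^j` is taken from the first approximation that no longer changes it. -/
def riccatiSol (D Dt : Derivation ℤ A A) (U V : ℤ → A) (k : ℤ) (τ : A) : ℤ → A :=
  fun j => riccatiApprox D Dt U V k τ (k - j).toNat j

section riccatiSol

variable (D Dt : Derivation ℤ A A) (U V : ℤ → A) (k : ℤ) (τ : A)

lemma riccatiApprox_add_apply (i : ℕ) {j : ℤ} (hj : k - i ≤ j) :
    ∀ l : ℕ, riccatiApprox D Dt U V k τ (i + l) j = riccatiApprox D Dt U V k τ i j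
  | 0 => rfl
  | l + 1 => by
    rw [← add_assoc, riccatiApprox, Function.update_of_ne (by omega)]
    exact riccatiApprox_add_apply i hj l

lemma riccatiApprox_apply_self (i : ℕ) : riccatiApprox D Dt U V k τ i k = τ := by
  simpa [riccatiApprox] using riccatiApprox_add_apply D Dt U V k τ 0 (j := k) (by omega) i

lemma riccatiApprox_apply_of_lt (i : ℕ) {j : ℤ} (hj : k < j) :
    riccatiApprox D Dt U V k τ i j = 0 := by
  simpa [riccatiApprox, hj.ne'] using
    riccatiApprox_add_apply D Dt U V k τ 0 (j := j) (by omega) i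

lemma riccatiSol_eq_riccatiApprox {i : ℕ} {j : ℤ} (hj : k - i ≤ j) :
    riccatiSol D Dt U V k τ j = riccatiApprox D Dt U V k τ i j := by
  obtain ⟨l, rfl⟩ := Nat.exists_eq_add_of_le (show (k - j).toNat ≤ i by omega)
  exact (riccatiApprox_add_apply D Dt U V k τ _ (by omega) l).symm

lemma riccatiSol_apply_self : riccatiSol D Dt U V k τ k = τ := by
  rw [riccatiSol_eq_riccatiApprox D Dt U V k τ (i := 0) (by omega),
    riccatiApprox_apply_self]

lemma riccatiSol_apply_of_lt {j : ℤ} (hj : k < j) : riccatiSol D Dt U V k τ j = 0 := by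
  rw [riccatiSol_eq_riccatiApprox D Dt U V k τ (i := 0) (by omega),
    riccatiApprox_apply_of_lt D Dt U V k τ 0 hj]

variable {U V k τ}

lemma riccati_riccatiApprox_succ (hk : 0 < k) (hV : ∀ i, k - 1 < i → V i = 0)
    (h2τ : IsUnit (2 * τ)) (i : ℕ) :
    riccati D Dt V (riccatiApprox D Dt U V k τ (i + 1)) (2 * k - (i + 1)) =
      U (2 * k - (i + 1)) := by
  have hdiff := riccati_apply_add_sub D Dt hk hV
    (fun _ => riccatiApprox_apply_of_lt D Dt U V k τ (i + 1))
    (fun _ => riccatiApprox_apply_of_lt D Dt U V k τ i)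
    (m := k - (i + 1)) (by omega) fun j hj => by
      rw [riccatiApprox, Function.update_of_ne (by omega)]
  rw [riccatiApprox_apply_self,
    show k + (k - (i + 1)) = 2 * k - (i + 1) by ring] at hdiff
  have hcorr : riccatiApprox D Dt U V k τ (i + 1) (k - (i + 1)) =
      riccatiApprox D Dt U V k τ i (k - (i + 1)) + Ring.inverse (2 * τ) *
        (U (2 * k - (i + 1)) -
          riccati D Dt V (riccatiApprox D Dt U V k τ i) (2 * k - (i + 1))) := by
    rw [riccatiApprox, Function.update_self]
  rw [hcorr] at hdiff
  linear_combination hdiff + (U (2 * k - (i + 1)) -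
    riccati D Dt V (riccatiApprox D Dt U V k τ i) (2 * k - (i + 1))) *
      Ring.mul_inverse_cancel _ h2τ

lemma riccati_riccatiSol (hk : 0 < k) (hV : ∀ i, k - 1 < i → V i = 0)
    (hU : ∀ n, 2 * k < n → U n = 0) (hτ : τ * τ = U (2 * k)) (h2τ : IsUnit (2 * τ)) :
    riccati D Dt V (riccatiSol D Dt U V k τ) = U := by
  have hbound : ∀ j, k < j → riccatiSol D Dt U V k τ j = 0 :=
    fun _ => riccatiSol_apply_of_lt D Dt U V k τ
  funext n
  obtain hn | rfl | hn := lt_trichotomy n (2 * k)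
  · obtain ⟨i, rfl⟩ : ∃ i : ℕ, n = 2 * k - (i + 1) := ⟨(2 * k - n - 1).toNat, by omega⟩
    rw [riccati_apply_congr D Dt hk.le hV hbound
      (fun _ => riccatiApprox_apply_of_lt D Dt U V k τ (i + 1))
      fun j hj => riccatiSol_eq_riccatiApprox D Dt U V k τ (by omega)]
    exact riccati_riccatiApprox_succ D Dt hk hV h2τ i
  · rw [riccati_apply_two_mul D Dt hk hV hbound, riccatiSol_apply_self, hτ]
  · rw [riccati_apply_of_lt D Dt hk.le hV hbound hn, hU n hn]

end riccatiSol

/-- the operator Riccati equation `T_t + T² − V T = U`, with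
`U = ∑_{i=0}^{2k} 𝔲_i D^i`, `V = ∑_{i=0}^{k-1} 𝔳_i D^i` and `T` a pseudo-differential
series of order `k`.  The leading coefficient of any solution satisfies
`τ_k² = 𝔲_{2k}`, and for each choice `τ` of a square root of the (invertible)
leading coefficient `𝔲_{2k}` there is exactly one solution of order `k` with
leading coefficient `τ`; in particular the equation has exactly two solutions
of order `k`, one for each square root. -/
theorem riccati_leading_and_unique_solution
    (D Dt : Derivation ℤ A A) (k : ℕ) (hk : 1 ≤ k)
    (U V : ℤ → A)
    (hU : ∀ i : ℤ, (i < 0 ∨ 2 * (k : ℤ) < i) → U i = 0)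
    (hV : ∀ i : ℤ, (i < 0 ∨ (k : ℤ) - 1 < i) → V i = 0)
    (hu : IsUnit (U (2 * (k : ℤ)))) (h2 : IsUnit (2 : A))
    (τ : A) (hτ : τ * τ = U (2 * (k : ℤ))) :
    (∀ T : ℤ → A, (∀ j : ℤ, (k : ℤ) < j → T j = 0) →
        ((fun n => Dt (T n)) + pdsMul (⇑D) T T - pdsMul (⇑D) V T = U) →
        T k * T k = U (2 * (k : ℤ))) ∧
    (∃! T : ℤ → A, (∀ j : ℤ, (k : ℤ) < j → T j = 0) ∧ T k = τ ∧
        ((fun n => Dt (T n)) + pdsMul (⇑D) T T - pdsMul (⇑D) V T = U)) := by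
  have hk₀ : (0 : ℤ) < k := by omega
  have hVtop : ∀ i : ℤ, (k : ℤ) - 1 < i → V i = 0 := fun i hi => hV i (Or.inr hi)
  have h2τ : IsUnit (2 * τ) := h2.mul (isUnit_of_mul_isUnit_left (hτ ▸ hu))
  have hsol : riccati D Dt V (riccatiSol D Dt U V k τ) = U :=
    riccati_riccatiSol D Dt hk₀ hVtop (fun n hn => hU n (Or.inr hn)) hτ h2τ
  refine ⟨fun T hT hRic => ?_, riccatiSol D Dt U V k τ,
    ⟨fun _ => riccatiSol_apply_of_lt D Dt U V k τ, riccatiSol_apply_self D Dt U V k τ, hsol⟩,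
    fun T ⟨hT, hTk, hRic⟩ => ?_⟩
  · rw [← riccati_apply_two_mul D Dt hk₀ hVtop hT]
    exact congrFun hRic _
  · refine eq_of_riccati_eq D Dt hk₀ hVtop hT (fun _ => riccatiSol_apply_of_lt D Dt U V k τ)
      (hTk.trans (riccatiSol_apply_self D Dt U V k τ).symm) (hTk ▸ h2τ) ?_
    exact hRic.trans hsol.symm
end
end
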